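/- arXiv:1910.13454 — 4 statements merged into one kernel-verified Lean document; each statement's English description precedes it below -/
import Mathlib

section
/- For all s₁, s₂ ∈ {−1, 1} and any real V, exp(s₁ s₂ V) = (1/2) ∑_{h ∈ {−1,1}} exp(V₁ s₁ h + V₂ s₂ h), where V₁ = (1/2)(arcsech(e^{−V}) + arcsech(e^{V}))·(appropriate branch) and V₂ = (1/2)(arcsech(e^{−V}) − arcsech(e^{V})); equivalently, there exist complex numbers V₁, V₂ satisfying e^V = cosh(V₁+V₂) and e^{−V} = cosh(V₁−V₂), and for any such V₁, V₂ the identity exp(s₁ s₂ V) = (1/2) ∑_{h=±1} exp(V₁ s₁ h + V₂ s₂ h) holds. -/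
open Complex

theorem cosh_surj' (w : ℂ) : ∃ z : ℂ, Complex.cosh z = w := by
  obtain ⟨z, hz⟩ := Complex.cos_surjective w
  exact ⟨z * I, by rwa [Complex.cosh_mul_I]⟩

theorem stmt0 (V : ℂ) :
    (∃ V₁ V₂ : ℂ, Complex.exp V = Complex.cosh (V₁ + V₂) ∧
        Complex.exp (-V) = Complex.cosh (V₁ - V₂)) ∧
    (∀ V₁ V₂ : ℂ, Complex.exp V = Complex.cosh (V₁ + V₂) →
        Complex.exp (-V) = Complex.cosh (V₁ - V₂) →
        ∀ s₁ s₂ : ℤ, s₁ ∈ ({-1, 1} : Set ℤ) → s₂ ∈ ({-1, 1} : Set ℤ) →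
          Complex.exp ((s₁ : ℂ) * (s₂ : ℂ) * V) =
            (1 / 2) * ∑ h ∈ ({-1, 1} : Finset ℤ),
              Complex.exp (V₁ * s₁ * h + V₂ * s₂ * h)) := by
  constructor
  · obtain ⟨a, ha⟩ := cosh_surj' (Complex.exp V)
    obtain ⟨b, hb⟩ := cosh_surj' (Complex.exp (-V))
    exact ⟨(a + b) / 2, (a - b) / 2, by rw [← ha]; ring_nf, by rw [← hb]; ring_nf⟩
  · intro V₁ V₂ h1 h2 s₁ s₂ hs₁ hs₂
    have hc : ∀ z : ℂ, Complex.cosh z = (Complex.exp z + Complex.exp (-z)) / 2 := by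
      intro z; rfl
    rcases hs₁ with rfl | rfl <;> rcases hs₂ with rfl | rfl <;>
      rw [Finset.sum_pair (show (-1:ℤ) ≠ 1 by decide)] <;>
      push_cast <;>
      first
        | (rw [show ((-1:ℂ)) * (-1) * V = V by ring, h1, hc]; ring_nf)
        | (rw [show ((1:ℂ)) * 1 * V = V by ring, h1, hc]; ring_nf)
        | (rw [show ((-1:ℂ)) * 1 * V = -V by ring, h2, hc]; ring_nf)
        | (rw [show ((1:ℂ)) * (-1) * V = -V by ring, h2, hc]; ring_nf)
end

section
/- Carleo–Nomura–Imada identity: for σ₁,…,σ_N ∈ {−1,1} and real V, exp(V σ₁σ₂⋯σ_N) = C cos²(b + (π/4)∑_{i=1}^N σ_i), where b = arctan(e^{−V}) − (π/4)·(N mod 4) and C = 1/(cos(arctan(e^{−V})) sin(arctan(e^{−V}))). -/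
/-!
Write `a = arctan (exp (-V))` and let `k` be the number of spins equal to `-1`. Then
`∏ σᵢ = (-1)^k` and `∑ σᵢ = N - 2k`, so the angle is `a - k π/2` up to a multiple of `π`,
which does not change `cos²`. Hence the right-hand side is `cos a / sin a = exp V` for even `k`
and `sin a / cos a = exp (-V)` for odd `k`.
-/

open Real Finset

section Signs

variable {ι : Type*} (s : Finset ι) (σ : ι → ℝ)

theorem Finset.prod_eq_neg_one_pow_card_filter_eq_neg_one
    (hσ : ∀ i ∈ s, σ i ∈ ({-1, 1} : Set ℝ)) :
    ∏ i ∈ s, σ i = (-1) ^ #(s.filter (σ · = -1)) := by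
  rw [← prod_filter_mul_prod_filter_not s (σ · = -1), prod_congr rfl fun i hi => (mem_filter.1 hi).2,
    prod_const, prod_eq_one, mul_one]
  intro i hi
  obtain ⟨hs, hne⟩ := mem_filter.1 hi
  simpa [hne] using hσ i hs

theorem Finset.sum_eq_card_sub_two_mul_card_filter_eq_neg_one
    (hσ : ∀ i ∈ s, σ i ∈ ({-1, 1} : Set ℝ)) :
    ∑ i ∈ s, σ i = #s - 2 * #(s.filter (σ · = -1)) := by
  have hpos : ∑ i ∈ s.filter (¬σ · = -1), σ i = #(s.filter (¬σ · = -1)) := by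
    rw [sum_congr rfl fun i hi => ?_, sum_const, nsmul_one]
    obtain ⟨hs, hne⟩ := mem_filter.1 hi
    simpa [hne] using hσ i hs
  rw [← sum_filter_add_sum_filter_not s (σ · = -1), hpos,
    sum_congr rfl fun i hi => (mem_filter.1 hi).2, sum_const, nsmul_eq_mul,
    ← card_filter_add_card_filter_not (s := s) (σ · = -1)]
  push_cast
  ring

end Signs

theorem Real.one_div_cos_mul_sin_arctan_mul_cos_sq (t : ℝ) :
    1 / (cos (arctan t) * sin (arctan t)) * cos (arctan t) ^ 2 = t⁻¹ := by
  have hcos := (cos_arctan_pos t).ne'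
  conv_rhs => rw [← tan_arctan t, tan_eq_sin_div_cos, inv_div]
  field_simp

theorem Real.one_div_cos_mul_sin_arctan_mul_sin_sq (t : ℝ) :
    1 / (cos (arctan t) * sin (arctan t)) * sin (arctan t) ^ 2 = t := by
  have hcos := (cos_arctan_pos t).ne'
  conv_rhs => rw [← tan_arctan t, tan_eq_sin_div_cos]
  by_cases hsin : sin (arctan t) = 0
  · simp [hsin]
  field_simp

theorem Real.cos_sub_nat_mul_pi_div_two_sq_of_even (x : ℝ) {k : ℕ} (hk : Even k) :
    cos (x - k * (π / 2)) ^ 2 = cos x ^ 2 := by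
  obtain ⟨q, rfl⟩ := hk
  rw [show ((q + q : ℕ) : ℝ) * (π / 2) = q * π by push_cast; ring, cos_sub_nat_mul_pi, mul_pow,
    ← pow_mul, pow_mul', neg_one_sq, one_pow, one_mul]

theorem Real.cos_sub_nat_mul_pi_div_two_sq_of_odd (x : ℝ) {k : ℕ} (hk : Odd k) :
    cos (x - k * (π / 2)) ^ 2 = sin x ^ 2 := by
  obtain ⟨q, rfl⟩ := hk
  rw [show x - ((2 * q + 1 : ℕ) : ℝ) * (π / 2) = x - π / 2 - q * π by push_cast; ring,
    cos_sub_nat_mul_pi, cos_sub_pi_div_two, mul_pow, ← pow_mul, pow_mul', neg_one_sq, one_pow,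
    one_mul]

theorem Real.exp_mul_neg_one_pow_eq (V : ℝ) (k : ℕ) :
    exp (V * (-1) ^ k) =
      1 / (cos (arctan (exp (-V))) * sin (arctan (exp (-V)))) *
        cos (arctan (exp (-V)) - k * (π / 2)) ^ 2 := by
  rcases Nat.even_or_odd k with hk | hk
  · rw [hk.neg_one_pow, mul_one, cos_sub_nat_mul_pi_div_two_sq_of_even _ hk,
      one_div_cos_mul_sin_arctan_mul_cos_sq, exp_neg, inv_inv]
  · rw [hk.neg_one_pow, mul_neg_one, cos_sub_nat_mul_pi_div_two_sq_of_odd _ hk,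
      one_div_cos_mul_sin_arctan_mul_sin_sq]

theorem stmt12 (N : ℕ) (σ : Fin N → ℝ) (hσ : ∀ i, σ i ∈ ({-1, 1} : Set ℝ)) (V : ℝ) :
    Real.exp (V * ∏ i, σ i) =
      (1 / (Real.cos (Real.arctan (Real.exp (-V))) *
            Real.sin (Real.arctan (Real.exp (-V))))) *
        (Real.cos ((Real.arctan (Real.exp (-V)) - Real.pi / 4 * (N % 4 : ℕ)) +
          Real.pi / 4 * ∑ i, σ i)) ^ 2 := by
  set k := #(univ.filter (σ · = -1))
  have hangle : arctan (exp (-V)) - π / 4 * (N % 4 : ℕ) + π / 4 * (N - 2 * k) =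
      arctan (exp (-V)) - k * (π / 2) + (N / 4 : ℕ) * π := by
    have hN : (N : ℝ) = 4 * (N / 4 : ℕ) + (N % 4 : ℕ) := by
      exact_mod_cast (Nat.div_add_mod N 4).symm
    linear_combination π / 4 * hN
  rw [prod_eq_neg_one_pow_card_filter_eq_neg_one _ _ fun i _ => hσ i,
    sum_eq_card_sub_two_mul_card_filter_eq_neg_one _ _ fun i _ => hσ i, card_univ,
    Fintype.card_fin, hangle, cos_add_nat_mul_pi, mul_pow, ← pow_mul, pow_mul', neg_one_sq,
    one_pow, one_mul, exp_mul_neg_one_pow_eq]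
end

section
/- For s₁, s₂, s₃ ∈ {0,1} and any complex V, the function exp(V s₁s₂s₃) can be written as a 1-layer RBM function of (s₁,s₂,s₃) with at most 5 hidden {0,1}-valued spins (i.e., there exist complex weights W ∈ ℂ^{3×5}, visible biases a ∈ ℂ³, hidden biases b ∈ ℂ⁵, and a constant c ∈ ℂ such that exp(V s₁s₂s₃) = e^c ∑_{h∈{0,1}⁵} exp(∑ W_{ij}s_i h_j + ∑ a_i s_i + ∑ b_j h_j) for all s ∈ {0,1}³). -/
/-
Write `σᵢ = 1 - 2sᵢ = exp (iπ sᵢ)`. Expanding `8 s₁s₂s₃ = (1 - σ₁)(1 - σ₂)(1 - σ₃)` gives a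
constant, the signs `σᵢ` (affine in `s`, hence visible biases), the three pair parities and the
triple parity `σ₁σ₂σ₃`, with coefficients `±1`. A hidden unit coupled with weight `iπ` to a set `S`
of spins and with bias `log (tanh β)` contributes the factor `1 + tanh β · σ_S`, which equals
`exp (β σ_S) / cosh β` because `σ_S = ±1`. With `β = V/8`, four such units produce the parities;
the fifth is idle. Only `exp V` matters, so `V` may be shifted by `2πi` to ensure `sinh β ≠ 0`
and `cosh β ≠ 0`, which makes the biases `log (±tanh β)` exact.
-/

/-- The value in `ℂ` of a `{0,1}`-valued spin. -/
def spinVal (x : Bool) : ℂ := if x then 1 else 0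

open Complex
open scoped Real

lemma sum_exp_sum_mul_spinVal {ι : Type*} [Fintype ι] [DecidableEq ι] (θ : ι → ℂ) :
    ∑ h : ι → Bool, exp (∑ j, θ j * spinVal (h j)) = ∏ j, (1 + exp (θ j)) := by
  simp_rw [exp_sum]
  rw [← Fintype.prod_sum fun j x => exp (θ j * spinVal x)]
  simp [spinVal, add_comm]

lemma rbm_sum_eq_exp_mul_prod (W : Fin 3 → Fin 5 → ℂ) (a : Fin 3 → ℂ) (b : Fin 5 → ℂ)
    (s₁ s₂ s₃ : ℂ) :
    ∑ h : Fin 5 → Bool,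
      exp (
        (W 0 0 * s₁ + W 1 0 * s₂ + W 2 0 * s₃) * spinVal (h 0) +
        (W 0 1 * s₁ + W 1 1 * s₂ + W 2 1 * s₃) * spinVal (h 1) +
        (W 0 2 * s₁ + W 1 2 * s₂ + W 2 2 * s₃) * spinVal (h 2) +
        (W 0 3 * s₁ + W 1 3 * s₂ + W 2 3 * s₃) * spinVal (h 3) +
        (W 0 4 * s₁ + W 1 4 * s₂ + W 2 4 * s₃) * spinVal (h 4) +
        a 0 * s₁ + a 1 * s₂ + a 2 * s₃ + ∑ j, b j * spinVal (h j)) =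
      exp (a 0 * s₁ + a 1 * s₂ + a 2 * s₃) *
        ∏ j, (1 + exp (W 0 j * s₁ + W 1 j * s₂ + W 2 j * s₃ + b j)) := by
  rw [← sum_exp_sum_mul_spinVal, Finset.mul_sum]
  refine Finset.sum_congr rfl fun h _ => ?_
  rw [← exp_add]
  congr 1
  simp only [Fin.sum_univ_five]
  ring

lemma cosh_mul_one_add_tanh_mul {b σ : ℂ} (hb : cosh b ≠ 0) (hσ : σ ^ 2 = 1) :
    cosh b * (1 + tanh b * σ) = exp (b * σ) := by
  rw [tanh_eq_sinh_div_cosh, mul_add, mul_one, ← mul_assoc, mul_div_cancel₀ _ hb]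
  rcases sq_eq_one_iff.mp hσ with rfl | rfl
  · simp [cosh_add_sinh]
  · simp [← cosh_sub_sinh, sub_eq_add_neg]

lemma exp_pi_mul_I_mul_of_mem {s : ℂ} (hs : s ∈ ({0, 1} : Set ℂ)) :
    exp (π * I * s) = 1 - 2 * s := by
  rcases hs with rfl | rfl <;> norm_num [exp_pi_mul_I]

lemma one_sub_two_mul_sq_of_mem {s : ℂ} (hs : s ∈ ({0, 1} : Set ℂ)) : (1 - 2 * s) ^ 2 = 1 := by
  rcases hs with rfl | rfl <;> norm_num

lemma exp_eight_mul_mul_mul_eq_prod_one_add_tanh {b s₁ s₂ s₃ : ℂ} (hb : cosh b ≠ 0)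
    (hs₁ : s₁ ∈ ({0, 1} : Set ℂ)) (hs₂ : s₂ ∈ ({0, 1} : Set ℂ)) (hs₃ : s₃ ∈ ({0, 1} : Set ℂ)) :
    exp (8 * b * (s₁ * s₂ * s₃)) = exp (2 * b * (s₁ + s₂ + s₃ - 1)) * cosh b ^ 4 *
      ((1 + tanh b * ((1 - 2 * s₁) * (1 - 2 * s₂))) *
        (1 + tanh b * ((1 - 2 * s₁) * (1 - 2 * s₃))) *
        (1 + tanh b * ((1 - 2 * s₂) * (1 - 2 * s₃))) *
        (1 - tanh b * ((1 - 2 * s₁) * (1 - 2 * s₂) * (1 - 2 * s₃)))) := by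
  have h₁ := one_sub_two_mul_sq_of_mem hs₁
  have h₂ := one_sub_two_mul_sq_of_mem hs₂
  have h₃ := one_sub_two_mul_sq_of_mem hs₃
  have hb' : cosh (-b) ≠ 0 := by rwa [cosh_neg]
  calc exp (8 * b * (s₁ * s₂ * s₃))
      = exp (2 * b * (s₁ + s₂ + s₃ - 1)) *
          (exp (b * ((1 - 2 * s₁) * (1 - 2 * s₂))) * exp (b * ((1 - 2 * s₁) * (1 - 2 * s₃))) *
            exp (b * ((1 - 2 * s₂) * (1 - 2 * s₃))) *
            exp (-b * ((1 - 2 * s₁) * (1 - 2 * s₂) * (1 - 2 * s₃)))) := by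
        simp only [← exp_add]
        ring_nf
    _ = _ := by
        rw [← cosh_mul_one_add_tanh_mul hb (by rw [mul_pow, h₁, h₂, one_mul]),
          ← cosh_mul_one_add_tanh_mul hb (by rw [mul_pow, h₁, h₃, one_mul]),
          ← cosh_mul_one_add_tanh_mul hb (by rw [mul_pow, h₂, h₃, one_mul]),
          ← cosh_mul_one_add_tanh_mul hb'
            (by rw [mul_pow, mul_pow, h₁, h₂, h₃, one_mul, one_mul]),
          cosh_neg, tanh_neg]
        ring

lemma exists_exp_eight_mul_eq_sinh_ne_zero_cosh_ne_zero (z : ℂ) :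
    ∃ β, exp (8 * β) = exp z ∧ sinh β ≠ 0 ∧ cosh β ≠ 0 := by
  suffices ∃ w, exp w = exp z ∧ sinh (w / 4) ≠ 0 by
    obtain ⟨w, hw, hsinh⟩ := this
    rw [show w / 4 = 2 * (w / 8) by ring, sinh_two_mul] at hsinh
    refine ⟨w / 8, by rwa [mul_div_cancel₀ w (by norm_num)], ?_, ?_⟩
    · exact right_ne_zero_of_mul (left_ne_zero_of_mul hsinh)
    · exact right_ne_zero_of_mul hsinh
  by_cases h : sinh (z / 4) = 0
  · refine ⟨z + 2 * π * I, by rw [exp_add, exp_two_pi_mul_I, mul_one], ?_⟩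
    have hcosh : cosh (z / 4) ≠ 0 := fun h0 => by simpa [h, h0] using cosh_sq (z / 4)
    rw [show (z + 2 * π * I) / 4 = z / 4 + (π / 2 : ℂ) * I by ring, sinh_add, sinh_mul_I,
      cosh_mul_I, sin_pi_div_two, cos_pi_div_two, h]
    simpa using hcosh
  · exact ⟨z, rfl, h⟩

theorem stmt14 (V : ℂ) :
    ∃ (W : Fin 3 → Fin 5 → ℂ) (a : Fin 3 → ℂ) (b : Fin 5 → ℂ) (c : ℂ),
      ∀ s₁ s₂ s₃ : ℂ, s₁ ∈ ({0, 1} : Set ℂ) → s₂ ∈ ({0, 1} : Set ℂ) →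
        s₃ ∈ ({0, 1} : Set ℂ) →
        Complex.exp (V * s₁ * s₂ * s₃) =
          Complex.exp c * ∑ h : Fin 5 → Bool,
            Complex.exp (
              (W 0 0 * s₁ + W 1 0 * s₂ + W 2 0 * s₃) * spinVal (h 0) +
              (W 0 1 * s₁ + W 1 1 * s₂ + W 2 1 * s₃) * spinVal (h 1) +
              (W 0 2 * s₁ + W 1 2 * s₂ + W 2 2 * s₃) * spinVal (h 2) +
              (W 0 3 * s₁ + W 1 3 * s₂ + W 2 3 * s₃) * spinVal (h 3) +
              (W 0 4 * s₁ + W 1 4 * s₂ + W 2 4 * s₃) * spinVal (h 4) +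
              a 0 * s₁ + a 1 * s₂ + a 2 * s₃ + ∑ j, b j * spinVal (h j)) := by
  obtain ⟨β, hβ, hsinh, hcosh⟩ := exists_exp_eight_mul_eq_sinh_ne_zero_cosh_ne_zero V
  have htanh : tanh β ≠ 0 := by rw [tanh_eq_sinh_div_cosh]; exact div_ne_zero hsinh hcosh
  refine ⟨![![π * I, π * I, 0, π * I, 0], ![π * I, 0, π * I, π * I, 0],
      ![0, π * I, π * I, π * I, 0]],
    fun _ => 2 * β, ![log (tanh β), log (tanh β), log (tanh β), log (-tanh β), 0],
    log (cosh β ^ 4 / 2) - 2 * β, fun s₁ s₂ s₃ hs₁ hs₂ hs₃ => ?_⟩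
  have hV : exp (V * s₁ * s₂ * s₃) = exp (8 * β * (s₁ * s₂ * s₃)) := by
    rcases hs₁ with rfl | rfl <;> rcases hs₂ with rfl | rfl <;> rcases hs₃ with rfl | rfl <;>
      simp [hβ]
  have hc : exp (log (cosh β ^ 4 / 2) - 2 * β) = cosh β ^ 4 / 2 / exp (2 * β) := by
    rw [exp_sub, exp_log (by simpa using hcosh)]
  have hvisible : exp (2 * β * (s₁ + s₂ + s₃ - 1)) =
      exp (2 * β * s₁) * exp (2 * β * s₂) * exp (2 * β * s₃) / exp (2 * β) := by
    rw [eq_div_iff (exp_ne_zero _)]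
    simp only [← exp_add]
    ring_nf
  rw [rbm_sum_eq_exp_mul_prod _ (fun _ => 2 * β), Fin.prod_univ_five, hV,
    exp_eight_mul_mul_mul_eq_prod_one_add_tanh hcosh hs₁ hs₂ hs₃, hc, hvisible]
  simp only [Matrix.cons_val, exp_add, exp_pi_mul_I_mul_of_mem hs₁, exp_pi_mul_I_mul_of_mem hs₂,
    exp_pi_mul_I_mul_of_mem hs₃, exp_log htanh, exp_log (neg_ne_zero.2 htanh), zero_mul, exp_zero]
  field_simp
  ring
end

section
/- For s₁, s₂ ∈ {0,1} and any complex V, exp(V s₁ s₂) equals a 1-layer RBM function with a single {0,1}-valued hidden spin: there exist complex w₁, w₂, a₁, a₂, b, c such that exp(V s₁ s₂) = e^c ∑_{h∈{0,1}} exp(w₁ s₁ h + w₂ s₂ h + a₁ s₁ + a₂ s₂ + b h) for all s₁, s₂ ∈ {0,1}. -/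
/-!
Writing `r = exp (V / 2)`, the choice `e^a = r`, `e^w = -1`, `e^b = (r - 1) / (r + 1)` and
`e^c = (r + 1) / (2 r)` satisfies the four constraints at `(s₁, s₂) ∈ {0, 1}²` whenever `r² = exp V ≠ 1`,
since then `r ≠ ±1` and all four quantities are nonzero, hence exponentials. If `exp V = 1`
the trivial machine with `e^c = 1 / 2` and all other parameters zero works.
-/

open Complex

theorem exp_mul_eq_rbm_of_constraints {V w₁ w₂ a₁ a₂ b c : ℂ}
    (h₀₀ : exp c * (1 + exp b) = 1)
    (h₀₁ : exp (c + a₂) * (1 + exp (b + w₂)) = 1)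
    (h₁₀ : exp (c + a₁) * (1 + exp (b + w₁)) = 1)
    (h₁₁ : exp (c + a₁ + a₂) * (1 + exp (b + w₁ + w₂)) = exp V) :
    ∀ s₁ s₂ : ℂ, s₁ ∈ ({0, 1} : Set ℂ) → s₂ ∈ ({0, 1} : Set ℂ) →
      exp (V * s₁ * s₂) =
        exp c * ∑ h : Bool,
          exp (w₁ * s₁ * (if h then 1 else 0) + w₂ * s₂ * (if h then 1 else 0) +
            a₁ * s₁ + a₂ * s₂ + b * (if h then 1 else 0)) := by
  simp only [exp_add] at h₀₁ h₁₀ h₁₁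
  rintro s₁ s₂ (rfl | rfl) (rfl | rfl) <;>
    simp only [Fintype.sum_bool, ite_true, Bool.false_eq_true, ite_false, mul_zero, mul_one,
      add_zero, exp_add, exp_zero]
  · linear_combination -h₀₀
  · linear_combination -h₀₁
  · linear_combination -h₁₀
  · linear_combination -h₁₁

theorem exists_rbm_constraints (V : ℂ) :
    ∃ w₁ w₂ a₁ a₂ b c : ℂ,
      exp c * (1 + exp b) = 1 ∧
      exp (c + a₂) * (1 + exp (b + w₂)) = 1 ∧
      exp (c + a₁) * (1 + exp (b + w₁)) = 1 ∧
      exp (c + a₁ + a₂) * (1 + exp (b + w₁ + w₂)) = exp V := by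
  by_cases hV : exp V = 1
  · refine ⟨0, 0, 0, 0, 0, -log 2, ?_⟩
    norm_num [hV, exp_neg, exp_log two_ne_zero]
  · obtain ⟨r, hrV⟩ : ∃ r, exp (V / 2) = r := ⟨_, rfl⟩
    have hr : r ^ 2 = exp V := by rw [← hrV, ← exp_nat_mul]; congr 1; ring
    have hr₀ : r ≠ 0 := hrV ▸ exp_ne_zero _
    have hr₁ : r - 1 ≠ 0 := fun h ↦ hV (by rw [← hr, sub_eq_zero.mp h, one_pow])
    have hr₂ : r + 1 ≠ 0 := fun h ↦ hV (by rw [← hr, eq_neg_of_add_eq_zero_left h]; norm_num)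
    refine ⟨Real.pi * I, Real.pi * I, V / 2, V / 2, log ((r - 1) / (r + 1)),
      log ((r + 1) / (2 * r)), ?_⟩
    simp only [exp_add, exp_pi_mul_I, hrV, exp_log (div_ne_zero hr₁ hr₂),
      exp_log (div_ne_zero hr₂ (mul_ne_zero two_ne_zero hr₀)), ← hr]
    refine ⟨?_, ?_, ?_, ?_⟩ <;> field_simp <;> ring

theorem stmt15 (V : ℂ) :
    ∃ w₁ w₂ a₁ a₂ b c : ℂ,
      ∀ s₁ s₂ : ℂ, s₁ ∈ ({0, 1} : Set ℂ) → s₂ ∈ ({0, 1} : Set ℂ) →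
        Complex.exp (V * s₁ * s₂) =
          Complex.exp c * ∑ h : Bool,
            Complex.exp (w₁ * s₁ * (if h then 1 else 0) + w₂ * s₂ * (if h then 1 else 0) +
              a₁ * s₁ + a₂ * s₂ + b * (if h then 1 else 0)) := by
  obtain ⟨w₁, w₂, a₁, a₂, b, c, h₀₀, h₀₁, h₁₀, h₁₁⟩ := exists_rbm_constraints V
  exact ⟨w₁, w₂, a₁, a₂, b, c, exp_mul_eq_rbm_of_constraints h₀₀ h₀₁ h₁₀ h₁₁⟩
end
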